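/- Energy estimate along the penalized flow. In the setting of the penalized coupled system (φ : ℝⁿ → ℝ convex L-Lipschitz with φ ≥ 0 = φ(0); ψ : ℝᵐ → [0,+∞] proper lsc convex with ψ ≥ 0 = ψ(0); b^x, b^z Lipschitz; f ∈ C([0,T];ℝⁿ); (x^p, z^p) solving ẋ^p + ∇φ_p(x^p) = b^x(x^p,z^p) + f, x^p(0)=x₀, and ż^p + ∇ψ_p(z^p) = b^z(x^p,z^p), z^p(0)=z₀), the following hold for every p ≥ 1 and every t ∈ [0,T]: (i) ψ_p(z^p(t)) + (1/2) ∫₀ᵗ ‖∇ψ_p(z^p(s))‖² ds ≤ ψ_p(z₀) + (1/2) ∫₀ᵗ ‖b^z(x^p(s), z^p(s))‖² ds; and (ii) if in addition ψ(z₀) < ∞, then sup_{p ≥ 1} ∫₀^T ‖∇ψ_p(z^p(s))‖² ds < ∞. -/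

import Mathlib

open Set MeasureTheory intervalIntegral

/-- The Moreau–Yosida regularization of a real-valued function. -/
noncomputable def moreauYosida {n : ℕ} (φ : EuclideanSpace ℝ (Fin n) → ℝ) (p : ℝ)
    (x : EuclideanSpace ℝ (Fin n)) : ℝ :=
  ⨅ z : EuclideanSpace ℝ (Fin n), (φ z + p / 2 * ‖x - z‖ ^ 2)

/-- The Moreau–Yosida regularization of an extended-real-valued function
(real-valued, as the infimum is finite for proper nonnegative `ψ`). -/
noncomputable def moreauYosidaE {m : ℕ} (ψ : EuclideanSpace ℝ (Fin m) → EReal) (p : ℝ)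
    (x : EuclideanSpace ℝ (Fin m)) : ℝ :=
  (⨅ z : EuclideanSpace ℝ (Fin m), (ψ z + ((p / 2 * ‖x - z‖ ^ 2 : ℝ) : EReal))).toReal

/-!
Both regularizations are infima, over the effective domain, of `z ↦ h z + p/2 ‖x - z‖²`.
Hence they are convex, and `x ↦ F x - p/2 ‖x‖²` is concave, being an infimum of functions
affine in `x`; a differentiable function squeezed in this way has a `p`-Lipschitz gradient
(co-coercivity). Along `ż = b - ∇ψ_p(z)` the energy `ψ_p(z) + ½∫‖∇ψ_p(z)‖² - ½∫‖b‖²`, whose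
integrands are continuous by that Lipschitz bound, then has derivative
`-½‖∇ψ_p(z) - b‖² ≤ 0`, which gives (i).
For (ii), convexity and minimality at `0` give `⟪x, ∇φ_p x⟫ ≥ 0` and `⟪z, ∇ψ_p z⟫ ≥ 0`, so the
gradient terms only decrease `‖x^p‖² + ‖z^p‖²` and Grönwall bounds it, hence also
`∫₀ᵀ ‖bᶻ(x^p, z^p)‖²`, independently of `p`. Then (i) at `t = T`, with `ψ_p ≥ 0` and
`ψ_p(z₀) ≤ ψ(z₀)`, bounds `∫₀ᵀ ‖∇ψ_p(z^p)‖²`.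
-/

open scoped RealInnerProductSpace NNReal

section Gradient

variable {E : Type*} [NormedAddCommGroup E] [InnerProductSpace ℝ E]

theorem lipschitzWith_of_inv_mul_norm_sub_sq_le_inner {g : E → E} {c : ℝ} (hc : 0 < c)
    (h : ∀ x y, c⁻¹ * ‖g x - g y‖ ^ 2 ≤ ⟪g x - g y, x - y⟫) : LipschitzWith c.toNNReal g := by
  refine LipschitzWith.of_dist_le_mul fun x y ↦ ?_
  rw [dist_eq_norm, dist_eq_norm, Real.coe_toNNReal c hc.le]
  have h₁ := (h x y).trans (real_inner_le_norm _ _)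
  rcases (norm_nonneg (g x - g y)).eq_or_lt with h₀ | h₀
  · rw [← h₀]; positivity
  · rw [inv_mul_le_iff₀ hc, sq, mul_left_comm] at h₁
    exact le_of_mul_le_mul_left h₁ h₀

variable [CompleteSpace E] {F : E → ℝ} {g : E → E} {c : ℝ}

theorem ConvexOn.add_inner_le_of_hasGradientAt (hF : ConvexOn ℝ univ F) {x v : E}
    (hv : HasGradientAt F v x) (y : E) : F x + ⟪v, y - x⟫ ≤ F y := by
  have hline : HasDerivAt (F ∘ AffineMap.lineMap (k := ℝ) x y) ⟪v, y - x⟫ 0 := by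
    simpa using hv.hasFDerivAt.comp_hasDerivAt_of_eq 0 AffineMap.hasDerivAt_lineMap (by simp)
  have := (hF.comp_affineMap (AffineMap.lineMap x y)).le_slope_of_hasDerivAt (mem_univ 0)
    (mem_univ 1) one_pos hline
  simp only [slope_def_field, Function.comp_apply, AffineMap.lineMap_apply_one,
    AffineMap.lineMap_apply_zero, sub_zero, div_one] at this
  linarith

theorem ConvexOn.inner_nonneg_of_hasGradientAt (hF : ConvexOn ℝ univ F) {x v : E}
    (hv : HasGradientAt F v x) (h₀ : F 0 ≤ F x) : 0 ≤ ⟪x, v⟫ := by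
  have := hF.add_inner_le_of_hasGradientAt hv 0
  rw [zero_sub, inner_neg_right, real_inner_comm] at this
  linarith

theorem ConcaveOn.le_add_inner_add_of_hasGradientAt
    (hF : ConcaveOn ℝ univ fun x ↦ F x - c / 2 * ‖x‖ ^ 2) {x v : E}
    (hv : HasGradientAt F v x) (y : E) : F y ≤ F x + ⟪v, y - x⟫ + c / 2 * ‖y - x‖ ^ 2 := by
  have hG : HasGradientAt (fun x ↦ c / 2 * ‖x‖ ^ 2 - F x) (c • x - v) x := by
    refine hasGradientAt_iff_hasFDerivAt.2
      ((((hasStrictFDerivAt_norm_sq x).hasFDerivAt.const_mul (c / 2)).fun_sub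
        hv.hasFDerivAt).congr_fderiv ?_)
    ext w
    simp only [sub_apply, smul_apply,
      innerSL_apply_apply, InnerProductSpace.toDual_apply_apply, inner_sub_left,
      real_inner_smul_left, nsmul_eq_mul, Nat.cast_ofNat, smul_eq_mul]
    ring
  have hconv : ConvexOn ℝ univ fun x ↦ c / 2 * ‖x‖ ^ 2 - F x := by
    have hneg : (fun x ↦ c / 2 * ‖x‖ ^ 2 - F x) = -fun x ↦ F x - c / 2 * ‖x‖ ^ 2 := by
      ext; simp
    exact hneg ▸ hF.neg
  have := hconv.add_inner_le_of_hasGradientAt hG y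
  rw [norm_sub_sq_real]
  rw [inner_sub_left, real_inner_smul_left, inner_sub_right, inner_sub_right,
    real_inner_self_eq_norm_sq] at this
  rw [inner_sub_right, real_inner_comm x y]
  linarith

theorem ConvexOn.add_inner_add_norm_sub_sq_le (hc : 0 < c) (hF : ConvexOn ℝ univ F)
    (hF' : ConcaveOn ℝ univ fun x ↦ F x - c / 2 * ‖x‖ ^ 2) (hg : ∀ x, HasGradientAt F (g x) x)
    (x y : E) : F x + ⟪g x, y - x⟫ + (2 * c)⁻¹ * ‖g y - g x‖ ^ 2 ≤ F y := by
  set d := g y - g x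
  -- compare `F x` and `F y` through the point `y - c⁻¹ • d`
  have h₁ := hF.add_inner_le_of_hasGradientAt (hg x) (y - c⁻¹ • d)
  have h₂ := hF'.le_add_inner_add_of_hasGradientAt (hg y) (y - c⁻¹ • d)
  have hd : c⁻¹ * ⟪g y, d⟫ - c⁻¹ * ⟪g x, d⟫ = c⁻¹ * ‖d‖ ^ 2 := by
    rw [← mul_sub, ← inner_sub_left, real_inner_self_eq_norm_sq]
  rw [sub_sub_cancel_left, norm_neg, norm_smul, inner_neg_right, real_inner_smul_right,
    mul_pow, Real.norm_eq_abs, sq_abs] at h₂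
  rw [sub_right_comm, inner_sub_right, real_inner_smul_right] at h₁
  have hc' : c / 2 * (c⁻¹ ^ 2 * ‖d‖ ^ 2) = (2 * c)⁻¹ * ‖d‖ ^ 2 := by field_simp
  have hc'' : c⁻¹ * ‖d‖ ^ 2 = 2 * ((2 * c)⁻¹ * ‖d‖ ^ 2) := by field_simp
  linarith

theorem ConvexOn.lipschitzWith_of_hasGradientAt (hc : 0 < c) (hF : ConvexOn ℝ univ F)
    (hF' : ConcaveOn ℝ univ fun x ↦ F x - c / 2 * ‖x‖ ^ 2) (hg : ∀ x, HasGradientAt F (g x) x) :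
    LipschitzWith c.toNNReal g := by
  refine lipschitzWith_of_inv_mul_norm_sub_sq_le_inner hc fun x y ↦ ?_
  have h₁ := hF.add_inner_add_norm_sub_sq_le hc hF' hg x y
  have h₂ := hF.add_inner_add_norm_sub_sq_le hc hF' hg y x
  have hc' : c⁻¹ = 2 * (2 * c)⁻¹ := by field_simp
  rw [norm_sub_rev] at h₁
  rw [inner_sub_left, inner_sub_right, inner_sub_right, hc']
  rw [inner_sub_right] at h₁ h₂
  linarith

end Gradient

noncomputable def moreauEnvOn {E : Type*} [NormedAddCommGroup E] (s : Set E) (h : E → ℝ)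
    (p : ℝ) (x : E) : ℝ :=
  ⨅ z : s, (h z + p / 2 * ‖x - z‖ ^ 2)

section MoreauEnvelope

variable {E : Type*} [NormedAddCommGroup E] {s : Set E} {h : E → ℝ} {p : ℝ}

theorem bddBelow_range_moreauEnvOn (hh : ∀ z ∈ s, 0 ≤ h z) (hp : 0 ≤ p) (x : E) :
    BddBelow (range fun z : s ↦ h z + p / 2 * ‖x - z‖ ^ 2) :=
  ⟨0, by rintro _ ⟨z, rfl⟩; have := hh z z.2; positivity⟩

theorem moreauEnvOn_le (hh : ∀ z ∈ s, 0 ≤ h z) (hp : 0 ≤ p) (x : E) {z : E} (hz : z ∈ s) :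
    moreauEnvOn s h p x ≤ h z + p / 2 * ‖x - z‖ ^ 2 :=
  ciInf_le (bddBelow_range_moreauEnvOn hh hp x) ⟨z, hz⟩

theorem le_moreauEnvOn (hs : s.Nonempty) {x : E} {c : ℝ}
    (H : ∀ z ∈ s, c ≤ h z + p / 2 * ‖x - z‖ ^ 2) : c ≤ moreauEnvOn s h p x :=
  have := hs.to_subtype
  le_ciInf fun z ↦ H z z.2

theorem moreauEnvOn_nonneg (hs : s.Nonempty) (hh : ∀ z ∈ s, 0 ≤ h z) (hp : 0 ≤ p) (x : E) :
    0 ≤ moreauEnvOn s h p x :=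
  le_moreauEnvOn hs fun z hz ↦ by have := hh z hz; positivity

theorem exists_lt_moreauEnvOn_add (hs : s.Nonempty) (x : E) {ε : ℝ} (hε : 0 < ε) :
    ∃ z ∈ s, h z + p / 2 * ‖x - z‖ ^ 2 < moreauEnvOn s h p x + ε := by
  have := hs.to_subtype
  obtain ⟨z, hz⟩ := exists_lt_of_ciInf_lt (lt_add_of_pos_right (moreauEnvOn s h p x) hε)
  exact ⟨z, z.2, hz⟩

theorem convexOn_moreauEnvOn [NormedSpace ℝ E] (hs : s.Nonempty) (hh : ConvexOn ℝ s h)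
    (hh₀ : ∀ z ∈ s, 0 ≤ h z) (hp : 0 ≤ p) : ConvexOn ℝ univ (moreauEnvOn s h p) := by
  refine ⟨convex_univ, fun x _ y _ a b ha hb hab ↦ le_of_forall_pos_le_add fun ε hε ↦ ?_⟩
  obtain ⟨z₁, hz₁, h₁⟩ := exists_lt_moreauEnvOn_add (h := h) (p := p) hs x hε
  obtain ⟨z₂, hz₂, h₂⟩ := exists_lt_moreauEnvOn_add (h := h) (p := p) hs y hε
  have hsq : ‖a • x + b • y - (a • z₁ + b • z₂)‖ ^ 2 ≤ a * ‖x - z₁‖ ^ 2 + b * ‖y - z₂‖ ^ 2 := by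
    rw [show a • x + b • y - (a • z₁ + b • z₂) = a • (x - z₁) + b • (y - z₂) by module]
    simpa using ((convexOn_norm convex_univ).pow (fun _ _ ↦ norm_nonneg _) 2).2
      (mem_univ (x - z₁)) (mem_univ (y - z₂)) ha hb hab
  calc moreauEnvOn s h p (a • x + b • y)
      ≤ h (a • z₁ + b • z₂) + p / 2 * ‖a • x + b • y - (a • z₁ + b • z₂)‖ ^ 2 :=
        moreauEnvOn_le hh₀ hp _ (hh.1 hz₁ hz₂ ha hb hab)
    _ ≤ a * h z₁ + b * h z₂ + p / 2 * (a * ‖x - z₁‖ ^ 2 + b * ‖y - z₂‖ ^ 2) := by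
        gcongr
        exact hh.2 hz₁ hz₂ ha hb hab
    _ = a * (h z₁ + p / 2 * ‖x - z₁‖ ^ 2) + b * (h z₂ + p / 2 * ‖y - z₂‖ ^ 2) := by ring
    _ ≤ a * (moreauEnvOn s h p x + ε) + b * (moreauEnvOn s h p y + ε) := by gcongr
    _ = a • moreauEnvOn s h p x + b • moreauEnvOn s h p y + ε := by
        simp only [smul_eq_mul]; linear_combination ε * hab

theorem concaveOn_moreauEnvOn_sub [InnerProductSpace ℝ E] (hs : s.Nonempty)
    (hh₀ : ∀ z ∈ s, 0 ≤ h z) (hp : 0 ≤ p) :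
    ConcaveOn ℝ univ fun x ↦ moreauEnvOn s h p x - p / 2 * ‖x‖ ^ 2 := by
  refine ⟨convex_univ, fun x _ y _ a b ha hb hab ↦ ?_⟩
  simp only [smul_eq_mul]
  rw [le_sub_iff_add_le]
  refine le_moreauEnvOn hs fun z hz ↦ ?_
  have hx := moreauEnvOn_le hh₀ hp x hz
  have hy := moreauEnvOn_le hh₀ hp y hz
  -- `‖x - z‖² - ‖x‖² = ‖z‖² - 2⟪x, z⟫` is affine in `x`
  have hid : a * (‖x - z‖ ^ 2 - ‖x‖ ^ 2) + b * (‖y - z‖ ^ 2 - ‖y‖ ^ 2)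
      = ‖a • x + b • y - z‖ ^ 2 - ‖a • x + b • y‖ ^ 2 := by
    simp only [norm_sub_sq_real, inner_add_left, real_inner_smul_left]
    linear_combination ‖z‖ ^ 2 * hab
  have hid' := congrArg (p / 2 * ·) hid
  have hz' : a * h z + b * h z = h z := by rw [← add_mul, hab, one_mul]
  linarith [mul_le_mul_of_nonneg_left hx ha, mul_le_mul_of_nonneg_left hy hb]

theorem inner_nonneg_of_hasGradientAt_moreauEnvOn [InnerProductSpace ℝ E] [CompleteSpace E]
    (hs : (0 : E) ∈ s) (hh : ConvexOn ℝ s h) (hh₀ : ∀ z ∈ s, 0 ≤ h z) (hh_zero : h 0 = 0)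
    (hp : 0 ≤ p) {x v : E} (hv : HasGradientAt (moreauEnvOn s h p) v x) : 0 ≤ ⟪x, v⟫ := by
  refine (convexOn_moreauEnvOn ⟨0, hs⟩ hh hh₀ hp).inner_nonneg_of_hasGradientAt hv ?_
  calc moreauEnvOn s h p 0 ≤ 0 := by simpa [hh_zero] using moreauEnvOn_le hh₀ hp 0 hs
    _ ≤ moreauEnvOn s h p x := moreauEnvOn_nonneg ⟨0, hs⟩ hh₀ hp x

end MoreauEnvelope

theorem ContinuousOn.hasDerivWithinAt_integral_Icc {f : ℝ → ℝ} {a b t : ℝ}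
    (hf : ContinuousOn f (Icc a b)) (ht : t ∈ Icc a b) :
    HasDerivWithinAt (fun τ ↦ ∫ s in a..τ, f s) (f t) (Icc a b) t := by
  have : Fact (t ∈ Icc a b) := ⟨ht⟩
  refine integral_hasDerivWithinAt_right ?_ (hf.stronglyMeasurableAtFilter_nhdsWithin
    measurableSet_Icc t) (hf t ht)
  exact (hf.mono (by rw [uIcc_of_le ht.1]; exact Icc_subset_Icc_right ht.2)).intervalIntegrable

theorem energy_le_of_hasDerivWithinAt {E : Type*} [NormedAddCommGroup E]
    [InnerProductSpace ℝ E] [CompleteSpace E] {F : E → ℝ} {g : E → E} {z b : ℝ → E} {T t : ℝ}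
    (hF : ∀ x, HasGradientAt F (g x) x) (hg : Continuous g) (hb : ContinuousOn b (Icc 0 T))
    (hz : ∀ t ∈ Icc 0 T, HasDerivWithinAt z (b t - g (z t)) (Icc 0 T) t) (ht : t ∈ Icc 0 T) :
    F (z t) + 1 / 2 * ∫ s in (0 : ℝ)..t, ‖g (z s)‖ ^ 2 ≤
      F (z 0) + 1 / 2 * ∫ s in (0 : ℝ)..t, ‖b s‖ ^ 2 := by
  have hgz : ContinuousOn (fun s ↦ ‖g (z s)‖ ^ 2) (Icc 0 T) :=
    ((hg.comp_continuousOn fun s hs ↦ (hz s hs).continuousWithinAt).norm).pow 2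
  have hb2 : ContinuousOn (fun s ↦ ‖b s‖ ^ 2) (Icc 0 T) := (hb.norm).pow 2
  set energy := fun τ ↦ F (z τ) + 1 / 2 * (∫ s in (0 : ℝ)..τ, ‖g (z s)‖ ^ 2)
    - 1 / 2 * ∫ s in (0 : ℝ)..τ, ‖b s‖ ^ 2
  have hderiv : ∀ τ ∈ Icc 0 T, HasDerivWithinAt energy
      (⟪g (z τ), b τ - g (z τ)⟫ + 1 / 2 * ‖g (z τ)‖ ^ 2 - 1 / 2 * ‖b τ‖ ^ 2) (Icc 0 T) τ :=
    fun τ hτ ↦ ((((hF (z τ)).hasFDerivAt.comp_hasDerivWithinAt τ (hz τ hτ)).add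
      ((hgz.hasDerivWithinAt_integral_Icc hτ).const_mul _)).sub
      ((hb2.hasDerivWithinAt_integral_Icc hτ).const_mul _))
  have hnonpos : ∀ τ ∈ Icc 0 T,
      ⟪g (z τ), b τ - g (z τ)⟫ + 1 / 2 * ‖g (z τ)‖ ^ 2 - 1 / 2 * ‖b τ‖ ^ 2 ≤ 0 := by
    intro τ _
    rw [inner_sub_right, real_inner_self_eq_norm_sq]
    nlinarith [norm_sub_sq_real (g (z τ)) (b τ), sq_nonneg ‖g (z τ) - b τ‖]
  have hanti : AntitoneOn energy (Icc 0 T) :=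
    antitoneOn_of_hasDerivWithinAt_nonpos (convex_Icc 0 T)
      (fun τ hτ ↦ (hderiv τ hτ).continuousWithinAt)
      (fun τ hτ ↦ (hderiv τ (interior_subset hτ)).mono interior_subset)
      fun τ hτ ↦ hnonpos τ (interior_subset hτ)
  have := hanti ⟨le_rfl, ht.1.trans ht.2⟩ ht ht.1
  simp only [energy, integral_same, mul_zero, sub_zero, add_zero] at this
  linarith

theorem le_gronwallBound_of_hasDerivWithinAt {v v' : ℝ → ℝ} {a b δ K ε : ℝ}
    (hv : ∀ t ∈ Icc a b, HasDerivWithinAt v (v' t) (Icc a b) t) (ha : v a ≤ δ)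
    (bound : ∀ t ∈ Icc a b, v' t ≤ K * v t + ε) :
    ∀ t ∈ Icc a b, v t ≤ gronwallBound δ K ε (t - a) :=
  le_gronwallBound_of_liminf_deriv_right_le (fun t ht ↦ (hv t ht).continuousWithinAt)
    (fun t ht _ hr ↦ ((hv t (Ico_subset_Icc_self ht)).mono_of_mem_nhdsWithin
      (Icc_mem_nhdsGE_of_mem ht)).liminf_right_slope_le hr) ha
    fun t ht ↦ bound t (Ico_subset_Icc_self ht)

section LipschitzDrift

variable {E F G : Type*} [SeminormedAddCommGroup E] [SeminormedAddCommGroup F]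
  [SeminormedAddCommGroup G]

theorem Prod.norm_sq_le (x : E × F) : ‖x‖ ^ 2 ≤ ‖x.1‖ ^ 2 + ‖x.2‖ ^ 2 := by
  rw [Prod.norm_def]
  rcases le_total ‖x.1‖ ‖x.2‖ with h | h
  · rw [max_eq_right h]; nlinarith [sq_nonneg ‖x.1‖]
  · rw [max_eq_left h]; nlinarith [sq_nonneg ‖x.2‖]

theorem LipschitzWith.norm_sq_le {b : E → G} {L : ℝ≥0} (hb : LipschitzWith L b) (x : E) :
    ‖b x‖ ^ 2 ≤ 2 * ‖b 0‖ ^ 2 + 2 * L ^ 2 * ‖x‖ ^ 2 := by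
  have h₁ : ‖b x - b 0‖ ≤ L * ‖x‖ := by simpa [dist_eq_norm] using hb.dist_le_mul x 0
  have h₂ := norm_le_norm_add_norm_sub' (b x) (b 0)
  nlinarith [norm_nonneg (b x), sq_nonneg (‖b 0‖ - L * ‖x‖)]

theorem LipschitzWith.integral_norm_sq_le {b : E × F → G} {L : ℝ≥0} (hb : LipschitzWith L b)
    {X : ℝ → E} {Z : ℝ → F} {R T : ℝ} (hT : 0 ≤ T)
    (hR : ∀ t ∈ Icc 0 T, ‖X t‖ ^ 2 + ‖Z t‖ ^ 2 ≤ R) :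
    ∫ s in (0 : ℝ)..T, ‖b (X s, Z s)‖ ^ 2 ≤ (2 * ‖b 0‖ ^ 2 + 2 * L ^ 2 * R) * T := by
  have hbound : ∀ s ∈ uIoc 0 T, ‖‖b (X s, Z s)‖ ^ 2‖ ≤ 2 * ‖b 0‖ ^ 2 + 2 * L ^ 2 * R := by
    intro s hs
    rw [uIoc_of_le hT] at hs
    rw [norm_pow, norm_norm]
    nlinarith [hb.norm_sq_le (X s, Z s), Prod.norm_sq_le (X s, Z s),
      hR s (Ioc_subset_Icc_self hs)]
  calc _ ≤ ‖∫ s in (0 : ℝ)..T, ‖b (X s, Z s)‖ ^ 2‖ := Real.le_norm_self _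
    _ ≤ _ := intervalIntegral.norm_integral_le_of_norm_le_const hbound
    _ = _ := by rw [sub_zero, abs_of_nonneg hT]

end LipschitzDrift

theorem norm_sq_add_norm_sq_le_gronwallBound {E F : Type*} [NormedAddCommGroup E]
    [InnerProductSpace ℝ E] [NormedAddCommGroup F] [InnerProductSpace ℝ F]
    {X : ℝ → E} {Z : ℝ → F} {f : ℝ → E} {bx : E × F → E} {bz : E × F → F} {gx : E → E}
    {gz : F → F} {Lx Lz : ℝ≥0} {M T : ℝ}
    (hbx : LipschitzWith Lx bx) (hbz : LipschitzWith Lz bz) (hf : ∀ t ∈ Icc 0 T, ‖f t‖ ≤ M)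
    (hgx : ∀ x, 0 ≤ ⟪x, gx x⟫) (hgz : ∀ z, 0 ≤ ⟪z, gz z⟫)
    (hX : ∀ t ∈ Icc 0 T, HasDerivWithinAt X (bx (X t, Z t) + f t - gx (X t)) (Icc 0 T) t)
    (hZ : ∀ t ∈ Icc 0 T, HasDerivWithinAt Z (bz (X t, Z t) - gz (Z t)) (Icc 0 T) t) :
    ∀ t ∈ Icc 0 T, ‖X t‖ ^ 2 + ‖Z t‖ ^ 2 ≤ gronwallBound (‖X 0‖ ^ 2 + ‖Z 0‖ ^ 2)
      (1 + 4 * Lx ^ 2 + 2 * Lz ^ 2) (4 * ‖bx 0‖ ^ 2 + 2 * M ^ 2 + 2 * ‖bz 0‖ ^ 2) T := by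
  have bound : ∀ t ∈ Icc 0 T,
      2 * ⟪X t, bx (X t, Z t) + f t - gx (X t)⟫ + 2 * ⟪Z t, bz (X t, Z t) - gz (Z t)⟫ ≤
        (1 + 4 * Lx ^ 2 + 2 * Lz ^ 2) * (‖X t‖ ^ 2 + ‖Z t‖ ^ 2) +
          (4 * ‖bx 0‖ ^ 2 + 2 * M ^ 2 + 2 * ‖bz 0‖ ^ 2) := by
    intro t ht
    have hXZ := Prod.norm_sq_le (X t, Z t)
    have hbx' := hbx.norm_sq_le (X t, Z t)
    have hbz' := hbz.norm_sq_le (X t, Z t)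
    have hf' : ‖f t‖ ^ 2 ≤ M ^ 2 := pow_le_pow_left₀ (norm_nonneg _) (hf t ht) 2
    have hsum : ‖bx (X t, Z t) + f t‖ ^ 2 ≤ 2 * ‖bx (X t, Z t)‖ ^ 2 + 2 * ‖f t‖ ^ 2 := by
      nlinarith [norm_add_le (bx (X t, Z t)) (f t), norm_nonneg (bx (X t, Z t) + f t),
        sq_nonneg (‖bx (X t, Z t)‖ - ‖f t‖)]
    rw [inner_sub_right, inner_sub_right]
    nlinarith [real_inner_le_norm (X t) (bx (X t, Z t) + f t),
      real_inner_le_norm (Z t) (bz (X t, Z t)), two_mul_le_add_sq ‖X t‖ ‖bx (X t, Z t) + f t‖,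
      two_mul_le_add_sq ‖Z t‖ ‖bz (X t, Z t)‖, hgx (X t), hgz (Z t),
      mul_le_mul_of_nonneg_left hXZ (sq_nonneg (Lx : ℝ)),
      mul_le_mul_of_nonneg_left hXZ (sq_nonneg (Lz : ℝ))]
  intro t ht
  have := le_gronwallBound_of_hasDerivWithinAt (v := fun t ↦ ‖X t‖ ^ 2 + ‖Z t‖ ^ 2)
    (fun t ht ↦ (hX t ht).norm_sq.add (hZ t ht).norm_sq) le_rfl bound t ht
  rw [sub_zero] at this
  refine this.trans (gronwallBound_mono ?_ ?_ ?_ ht.2) <;> positivity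

theorem EReal.convexOn_toReal {E : Type*} [AddCommGroup E] [Module ℝ E] {ψ : E → EReal}
    (hψ₀ : ∀ z, 0 ≤ ψ z)
    (hψ_conv : ∀ z w : E, ∀ a b : ℝ, 0 ≤ a → 0 ≤ b → a + b = 1 →
      ψ (a • z + b • w) ≤ (a : EReal) * ψ z + (b : EReal) * ψ w) :
    ConvexOn ℝ {z | ψ z ≠ ⊤} fun z ↦ (ψ z).toReal := by
  have hbot : ∀ z, ψ z ≠ ⊥ := fun z ↦ (EReal.bot_lt_zero.trans_le (hψ₀ z)).ne'
  have key : ∀ ⦃z⦄, ψ z ≠ ⊤ → ∀ ⦃w⦄, ψ w ≠ ⊤ → ∀ ⦃a b : ℝ⦄, 0 ≤ a → 0 ≤ b → a + b = 1 →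
      ψ (a • z + b • w) ≤ ((a * (ψ z).toReal + b * (ψ w).toReal : ℝ) : EReal) := by
    intro z hz w hw a b ha hb hab
    have := hψ_conv z w a b ha hb hab
    rwa [← EReal.coe_toReal hz (hbot z), ← EReal.coe_toReal hw (hbot w), ← EReal.coe_mul,
      ← EReal.coe_mul, ← EReal.coe_add] at this
  refine ⟨fun z hz w hw a b ha hb hab ↦ ?_, fun z hz w hw a b ha hb hab ↦ ?_⟩
  · exact ((key hz hw ha hb hab).trans_lt (EReal.coe_lt_top _)).ne
  · have := EReal.toReal_le_toReal (key hz hw ha hb hab) (hbot _) (EReal.coe_ne_top _)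
    rwa [EReal.toReal_coe] at this

section Regularizations

variable {n m : ℕ} {p : ℝ}

theorem moreauYosida_eq_moreauEnvOn (φ : EuclideanSpace ℝ (Fin n) → ℝ) (p : ℝ) :
    moreauYosida φ p = moreauEnvOn univ φ p :=
  funext fun x ↦ ((Equiv.Set.univ _).surjective.iInf_comp
    fun z ↦ φ z + p / 2 * ‖x - z‖ ^ 2).symm

theorem inner_nonneg_of_hasGradientAt_moreauYosida {φ : EuclideanSpace ℝ (Fin n) → ℝ}
    (hp : 0 ≤ p) (hφ_conv : ConvexOn ℝ univ φ) (hφ₀ : ∀ x, 0 ≤ φ x) (hφ_zero : φ 0 = 0)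
    {x v : EuclideanSpace ℝ (Fin n)} (hv : HasGradientAt (moreauYosida φ p) v x) :
    0 ≤ ⟪x, v⟫ := by
  rw [moreauYosida_eq_moreauEnvOn] at hv
  exact inner_nonneg_of_hasGradientAt_moreauEnvOn (mem_univ 0) hφ_conv (fun z _ ↦ hφ₀ z) hφ_zero
    hp hv

variable {ψ : EuclideanSpace ℝ (Fin m) → EReal}

theorem moreauYosidaE_eq_moreauEnvOn (hp : 0 ≤ p) (hψ₀ : ∀ z, 0 ≤ ψ z) (hψ_dom : ∃ z, ψ z ≠ ⊤) :
    moreauYosidaE ψ p = moreauEnvOn {z | ψ z ≠ ⊤} (fun z ↦ (ψ z).toReal) p := by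
  ext x
  have : Nonempty {z | ψ z ≠ ⊤} := nonempty_subtype.2 hψ_dom
  have hbot : ∀ z, ψ z ≠ ⊥ := fun z ↦ (EReal.bot_lt_zero.trans_le (hψ₀ z)).ne'
  set c : EuclideanSpace ℝ (Fin m) → ℝ := fun z ↦ p / 2 * ‖x - z‖ ^ 2
  have hinf : ⨅ z, ψ z + (c z : EReal) =
      ⨅ z : {z | ψ z ≠ ⊤}, (((ψ z).toReal + c z : ℝ) : EReal) := by
    refine le_antisymm (le_iInf fun z ↦ iInf_le_of_le z.1 ?_) (le_iInf fun z ↦ ?_)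
    · rw [EReal.coe_add, EReal.coe_toReal z.2 (hbot z)]
    · by_cases hz : ψ z = ⊤
      · simp [hz, EReal.top_add_of_ne_bot (EReal.coe_ne_bot _)]
      · refine iInf_le_of_le ⟨z, hz⟩ ?_
        rw [EReal.coe_add, EReal.coe_toReal hz (hbot z)]
  rw [moreauYosidaE, hinf, ← Monotone.map_ciInf_of_continuousAt
    continuous_coe_real_ereal.continuousAt (fun _ _ ↦ EReal.coe_le_coe_iff.2)
    (bddBelow_range_moreauEnvOn (fun z _ ↦ EReal.toReal_nonneg (hψ₀ z)) hp x), EReal.toReal_coe]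
  rfl

theorem moreauYosidaE_nonneg (hp : 0 ≤ p) (hψ₀ : ∀ z, 0 ≤ ψ z) (hψ_dom : ∃ z, ψ z ≠ ⊤)
    (x : EuclideanSpace ℝ (Fin m)) : 0 ≤ moreauYosidaE ψ p x := by
  rw [moreauYosidaE_eq_moreauEnvOn hp hψ₀ hψ_dom]
  exact moreauEnvOn_nonneg hψ_dom (fun z _ ↦ EReal.toReal_nonneg (hψ₀ z)) hp x

theorem moreauYosidaE_le_toReal (hp : 0 ≤ p) (hψ₀ : ∀ z, 0 ≤ ψ z)
    {z : EuclideanSpace ℝ (Fin m)} (hz : ψ z ≠ ⊤) : moreauYosidaE ψ p z ≤ (ψ z).toReal := by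
  rw [moreauYosidaE_eq_moreauEnvOn hp hψ₀ ⟨z, hz⟩]
  simpa using moreauEnvOn_le (s := {z | ψ z ≠ ⊤}) (fun z _ ↦ EReal.toReal_nonneg (hψ₀ z)) hp z hz

theorem lipschitzWith_of_hasGradientAt_moreauYosidaE (hp : 0 < p) (hψ₀ : ∀ z, 0 ≤ ψ z)
    (hψ_dom : ∃ z, ψ z ≠ ⊤)
    (hψ_conv : ∀ z w : EuclideanSpace ℝ (Fin m), ∀ a b : ℝ, 0 ≤ a → 0 ≤ b → a + b = 1 →
      ψ (a • z + b • w) ≤ (a : EReal) * ψ z + (b : EReal) * ψ w)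
    {g : EuclideanSpace ℝ (Fin m) → EuclideanSpace ℝ (Fin m)}
    (hg : ∀ x, HasGradientAt (moreauYosidaE ψ p) (g x) x) : LipschitzWith p.toNNReal g := by
  have hψr₀ : ∀ z ∈ {z | ψ z ≠ ⊤}, 0 ≤ (ψ z).toReal := fun z _ ↦ EReal.toReal_nonneg (hψ₀ z)
  rw [moreauYosidaE_eq_moreauEnvOn hp.le hψ₀ hψ_dom] at hg
  exact (convexOn_moreauEnvOn hψ_dom (EReal.convexOn_toReal hψ₀ hψ_conv) hψr₀
    hp.le).lipschitzWith_of_hasGradientAt hp (concaveOn_moreauEnvOn_sub hψ_dom hψr₀ hp.le) hg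

theorem inner_nonneg_of_hasGradientAt_moreauYosidaE (hp : 0 ≤ p) (hψ₀ : ∀ z, 0 ≤ ψ z)
    (hψ_zero : ψ 0 = 0)
    (hψ_conv : ∀ z w : EuclideanSpace ℝ (Fin m), ∀ a b : ℝ, 0 ≤ a → 0 ≤ b → a + b = 1 →
      ψ (a • z + b • w) ≤ (a : EReal) * ψ z + (b : EReal) * ψ w)
    {x v : EuclideanSpace ℝ (Fin m)} (hv : HasGradientAt (moreauYosidaE ψ p) v x) :
    0 ≤ ⟪x, v⟫ := by
  have h0 : (0 : EuclideanSpace ℝ (Fin m)) ∈ {z | ψ z ≠ ⊤} := by simp [hψ_zero]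
  rw [moreauYosidaE_eq_moreauEnvOn hp hψ₀ ⟨0, h0⟩] at hv
  exact inner_nonneg_of_hasGradientAt_moreauEnvOn h0 (EReal.convexOn_toReal hψ₀ hψ_conv)
    (fun z _ ↦ EReal.toReal_nonneg (hψ₀ z)) (by simp [hψ_zero]) hp hv

end Regularizations

theorem penalized_coupled_energy_estimate_general {n m : ℕ} (T : ℝ) (hT : 0 < T)
    (f : ℝ → EuclideanSpace ℝ (Fin n)) (hf : ContinuousOn f (Icc 0 T))
    (bx : EuclideanSpace ℝ (Fin n) × EuclideanSpace ℝ (Fin m) → EuclideanSpace ℝ (Fin n))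
    (bz : EuclideanSpace ℝ (Fin n) × EuclideanSpace ℝ (Fin m) → EuclideanSpace ℝ (Fin m))
    (hbx : ∃ Lx : NNReal, LipschitzWith Lx bx) (hbz : ∃ Lz : NNReal, LipschitzWith Lz bz)
    (φ : EuclideanSpace ℝ (Fin n) → ℝ) (hφconv : ConvexOn ℝ univ φ)
    (hφ0 : ∀ x, 0 ≤ φ x) (hφzero : φ 0 = 0)
    (ψ : EuclideanSpace ℝ (Fin m) → EReal)
    (hψ0 : ∀ z, 0 ≤ ψ z) (hψzero : ψ 0 = 0)
    (hψconv : ∀ z w : EuclideanSpace ℝ (Fin m), ∀ a b : ℝ, 0 ≤ a → 0 ≤ b → a + b = 1 →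
      ψ (a • z + b • w) ≤ (a : EReal) * ψ z + (b : EReal) * ψ w)
    (gφ : ℝ → EuclideanSpace ℝ (Fin n) → EuclideanSpace ℝ (Fin n))
    (gψ : ℝ → EuclideanSpace ℝ (Fin m) → EuclideanSpace ℝ (Fin m))
    (hgφ : ∀ p : ℝ, 1 ≤ p → ∀ x, HasGradientAt (moreauYosida φ p) (gφ p x) x)
    (hgψ : ∀ p : ℝ, 1 ≤ p → ∀ x, HasGradientAt (moreauYosidaE ψ p) (gψ p x) x)
    (x₀ : EuclideanSpace ℝ (Fin n)) (z₀ : EuclideanSpace ℝ (Fin m))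
    (X : ℝ → ℝ → EuclideanSpace ℝ (Fin n)) (Z : ℝ → ℝ → EuclideanSpace ℝ (Fin m))
    (hX0 : ∀ p : ℝ, 1 ≤ p → X p 0 = x₀) (hZ0 : ∀ p : ℝ, 1 ≤ p → Z p 0 = z₀)
    (hXode : ∀ p : ℝ, 1 ≤ p → ∀ t ∈ Icc (0 : ℝ) T,
      HasDerivWithinAt (X p) (bx (X p t, Z p t) + f t - gφ p (X p t)) (Icc 0 T) t)
    (hZode : ∀ p : ℝ, 1 ≤ p → ∀ t ∈ Icc (0 : ℝ) T,
      HasDerivWithinAt (Z p) (bz (X p t, Z p t) - gψ p (Z p t)) (Icc 0 T) t) :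
    (∀ p : ℝ, 1 ≤ p → ∀ t ∈ Icc (0 : ℝ) T,
      moreauYosidaE ψ p (Z p t) + 1 / 2 * ∫ s in (0 : ℝ)..t, ‖gψ p (Z p s)‖ ^ 2 ≤
        moreauYosidaE ψ p z₀ + 1 / 2 * ∫ s in (0 : ℝ)..t, ‖bz (X p s, Z p s)‖ ^ 2) ∧
    (ψ z₀ ≠ ⊤ → ∃ M : ℝ, ∀ p : ℝ, 1 ≤ p →
      ∫ s in (0 : ℝ)..T, ‖gψ p (Z p s)‖ ^ 2 ≤ M) := by
  obtain ⟨Lx, hLx⟩ := hbx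
  obtain ⟨Lz, hLz⟩ := hbz
  have hψ : ∃ z, ψ z ≠ ⊤ := ⟨0, by simp [hψzero]⟩
  have hbz_cont (p : ℝ) (hp : 1 ≤ p) : ContinuousOn (fun s ↦ bz (X p s, Z p s)) (Icc 0 T) :=
    hLz.continuous.comp_continuousOn <| ContinuousOn.prodMk
      (fun s hs ↦ (hXode p hp s hs).continuousWithinAt)
      (fun s hs ↦ (hZode p hp s hs).continuousWithinAt)
  have energy := fun p (hp : 1 ≤ p) t (ht : t ∈ Icc 0 T) ↦ hZ0 p hp ▸
    energy_le_of_hasDerivWithinAt (hgψ p hp) (lipschitzWith_of_hasGradientAt_moreauYosidaE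
      (by linarith) hψ0 hψ hψconv (hgψ p hp)).continuous (hbz_cont p hp) (hZode p hp) ht
  refine ⟨energy, fun hz₀ ↦ ?_⟩
  obtain ⟨M, hM⟩ := isCompact_Icc.exists_bound_of_continuousOn hf
  set R := gronwallBound (‖x₀‖ ^ 2 + ‖z₀‖ ^ 2) (1 + 4 * Lx ^ 2 + 2 * Lz ^ 2)
    (4 * ‖bx 0‖ ^ 2 + 2 * M ^ 2 + 2 * ‖bz 0‖ ^ 2) T
  refine ⟨2 * (ψ z₀).toReal + (2 * ‖bz 0‖ ^ 2 + 2 * Lz ^ 2 * R) * T, fun p hp ↦ ?_⟩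
  have hXZ := norm_sq_add_norm_sq_le_gronwallBound hLx hLz hM
    (fun x ↦ inner_nonneg_of_hasGradientAt_moreauYosida (by linarith) hφconv hφ0 hφzero
      (hgφ p hp x))
    (fun z ↦ inner_nonneg_of_hasGradientAt_moreauYosidaE (by linarith) hψ0 hψzero hψconv
      (hgψ p hp z)) (hXode p hp) (hZode p hp)
  rw [hX0 p hp, hZ0 p hp] at hXZ
  have hbz := hLz.integral_norm_sq_le hT.le hXZ
  have hE := energy p hp T ⟨hT.le, le_rfl⟩
  have h₀ := moreauYosidaE_nonneg (p := p) (by linarith) hψ0 hψ (Z p T)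
  have h₁ := moreauYosidaE_le_toReal (p := p) (by linarith) hψ0 hz₀
  linarith

/-- Energy estimate along the penalized flow: for every `p ≥ 1` and `t ∈ [0,T]`,
`ψ_p(z^p(t)) + (1/2)∫₀ᵗ ‖∇ψ_p(z^p(s))‖² ds ≤ ψ_p(z₀) + (1/2)∫₀ᵗ ‖bᶻ(x^p(s),z^p(s))‖² ds`;
and if moreover `ψ(z₀) < ∞`, then `sup_{p≥1} ∫₀ᵀ ‖∇ψ_p(z^p(s))‖² ds < ∞`. -/
theorem penalized_coupled_energy_estimate {n m : ℕ} (T : ℝ) (hT : 0 < T)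
    (f : ℝ → EuclideanSpace ℝ (Fin n)) (hf : ContinuousOn f (Icc 0 T))
    (bx : EuclideanSpace ℝ (Fin n) × EuclideanSpace ℝ (Fin m) → EuclideanSpace ℝ (Fin n))
    (bz : EuclideanSpace ℝ (Fin n) × EuclideanSpace ℝ (Fin m) → EuclideanSpace ℝ (Fin m))
    (hbx : ∃ Lx : NNReal, LipschitzWith Lx bx) (hbz : ∃ Lz : NNReal, LipschitzWith Lz bz)
    (φ : EuclideanSpace ℝ (Fin n) → ℝ) (hφconv : ConvexOn ℝ univ φ)
    (L : NNReal) (hφLip : LipschitzWith L φ) (hφ0 : ∀ x, 0 ≤ φ x) (hφzero : φ 0 = 0)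
    (ψ : EuclideanSpace ℝ (Fin m) → EReal)
    (hψ0 : ∀ z, 0 ≤ ψ z) (hψzero : ψ 0 = 0) (hψproper : ∃ z, ψ z ≠ ⊤)
    (hψlsc : LowerSemicontinuous ψ)
    (hψconv : ∀ z w : EuclideanSpace ℝ (Fin m), ∀ a b : ℝ, 0 ≤ a → 0 ≤ b → a + b = 1 →
      ψ (a • z + b • w) ≤ (a : EReal) * ψ z + (b : EReal) * ψ w)
    (gφ : ℝ → EuclideanSpace ℝ (Fin n) → EuclideanSpace ℝ (Fin n))
    (gψ : ℝ → EuclideanSpace ℝ (Fin m) → EuclideanSpace ℝ (Fin m))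
    (hgφ : ∀ p : ℝ, 1 ≤ p → ∀ x, HasGradientAt (moreauYosida φ p) (gφ p x) x)
    (hgψ : ∀ p : ℝ, 1 ≤ p → ∀ x, HasGradientAt (moreauYosidaE ψ p) (gψ p x) x)
    (x₀ : EuclideanSpace ℝ (Fin n)) (z₀ : EuclideanSpace ℝ (Fin m))
    (X : ℝ → ℝ → EuclideanSpace ℝ (Fin n)) (Z : ℝ → ℝ → EuclideanSpace ℝ (Fin m))
    (hX0 : ∀ p : ℝ, 1 ≤ p → X p 0 = x₀) (hZ0 : ∀ p : ℝ, 1 ≤ p → Z p 0 = z₀)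
    (hXode : ∀ p : ℝ, 1 ≤ p → ∀ t ∈ Icc (0 : ℝ) T,
      HasDerivWithinAt (X p) (bx (X p t, Z p t) + f t - gφ p (X p t)) (Icc 0 T) t)
    (hZode : ∀ p : ℝ, 1 ≤ p → ∀ t ∈ Icc (0 : ℝ) T,
      HasDerivWithinAt (Z p) (bz (X p t, Z p t) - gψ p (Z p t)) (Icc 0 T) t) :
    (∀ p : ℝ, 1 ≤ p → ∀ t ∈ Icc (0 : ℝ) T,
      moreauYosidaE ψ p (Z p t) + 1 / 2 * ∫ s in (0 : ℝ)..t, ‖gψ p (Z p s)‖ ^ 2 ≤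
        moreauYosidaE ψ p z₀ + 1 / 2 * ∫ s in (0 : ℝ)..t, ‖bz (X p s, Z p s)‖ ^ 2) ∧
    (ψ z₀ ≠ ⊤ → ∃ M : ℝ, ∀ p : ℝ, 1 ≤ p →
      ∫ s in (0 : ℝ)..T, ‖gψ p (Z p s)‖ ^ 2 ≤ M) :=
  penalized_coupled_energy_estimate_general T hT f hf bx bz hbx hbz φ hφconv hφ0 hφzero ψ hψ0 hψzero
    hψconv gφ gψ hgφ hgψ x₀ z₀ X Z hX0 hZ0 hXode hZode
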